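/- Fix integers k ≥ 2, m ≥ 1, q ≥ 1. Define 𝒫(k;m,q) to be the set of polynomials P(x) = Σ_{n=0}^{k-2} a_n x^{k-n-2} with rational coefficients such that q^{n+1}·a_n ∈ m·ℤ for all 0 ≤ n ≤ k-2. Let γ = [[a,b],[c,d]] ∈ SL₂(ℤ) with q | c. If P ∈ 𝒫(k;m,q), then the polynomial (P|_{2-k}γ)(x) := Σ_{n=0}^{k-2} a_n (cx+d)^n (ax+b)^{k-n-2} also lies in 𝒫(k;m,q). -/

import Mathlib

open Polynomial

/-- The set `𝒫(k; m, q)` of polynomials `Σ_{n=0}^{k-2} a_n x^{k-n-2} ∈ ℚ[x]`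
with `q^(n+1) a_n ∈ m ℤ` for all `0 ≤ n ≤ k-2`. -/
def memP (k m q : ℕ) (P : Polynomial ℚ) : Prop :=
  P.natDegree ≤ k - 2 ∧
    ∀ n ≤ k - 2, ∃ t : ℤ, (q : ℚ) ^ (n + 1) * P.coeff (k - 2 - n) = (m : ℚ) * t

lemma coeff_linear_pow (u v : ℚ) (n i : ℕ) :
    ((C u * X + C v) ^ n).coeff i = (n.choose i : ℚ) * u ^ i * v ^ (n - i) := by
  rw [add_pow, finset_sum_coeff]
  have key : ∀ p ∈ Finset.range (n + 1),
      ((C u * X) ^ p * C v ^ (n - p) * (n.choose p : ℚ[X])).coeff i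
        = if i = p then (n.choose p : ℚ) * u ^ p * v ^ (n - p) else 0 := by
    intro p _
    have : (C u * X) ^ p * C v ^ (n - p) * (n.choose p : ℚ[X])
        = C ((n.choose p : ℚ) * u ^ p * v ^ (n - p)) * X ^ p := by
      rw [mul_pow, ← C_pow, ← C_pow, ← C_eq_natCast, C_mul, C_mul]
      ring
    rw [this, coeff_C_mul, coeff_X_pow]
    split_ifs <;> simp
  rw [Finset.sum_congr rfl key, Finset.sum_ite_eq (Finset.range (n + 1)) i]
  split_ifs with h
  · rfl
  · rw [Finset.mem_range] at h
    rw [Nat.choose_eq_zero_of_lt (by omega)]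
    simp

lemma sum_exists_int (m : ℕ) {α : Type*} (s : Finset α) (f : α → ℚ)
    (h : ∀ x ∈ s, ∃ t : ℤ, f x = (m : ℚ) * t) :
    ∃ t : ℤ, ∑ x ∈ s, f x = (m : ℚ) * t := by
  classical
  induction s using Finset.induction_on with
  | empty => exact ⟨0, by simp⟩
  | insert x s hx ih =>
    obtain ⟨t1, ht1⟩ := h _ (Finset.mem_insert_self _ _)
    obtain ⟨t2, ht2⟩ := ih fun x hx => h x (Finset.mem_insert_of_mem hx)
    exact ⟨t1 + t2, by rw [Finset.sum_insert hx, ht1, ht2]; push_cast; ring⟩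

theorem memP_slash (k m q : ℕ) (hk : 2 ≤ k) (hm : 1 ≤ m) (hq : 1 ≤ q)
    (a b c d : ℤ) (hdet : a * d - b * c = 1) (hc : (q : ℤ) ∣ c)
    (coefs : ℕ → ℚ)
    (hcoefs : ∀ n ≤ k - 2, ∃ t : ℤ, (q : ℚ) ^ (n + 1) * coefs n = (m : ℚ) * t) :
    memP k m q
      (∑ n ∈ Finset.range (k - 1),
        C (coefs n) * (C (c : ℚ) * X + C (d : ℚ)) ^ n *
          (C (a : ℚ) * X + C (b : ℚ)) ^ (k - n - 2)) := by
  obtain ⟨e, he⟩ := hc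
  constructor
  · apply Polynomial.natDegree_sum_le_of_forall_le
    intro n hn
    rw [Finset.mem_range] at hn
    have h1 : ((C (c : ℚ) * X + C (d : ℚ)) ^ n).natDegree ≤ n :=
      natDegree_pow_le.trans (by
        calc n * (C (c:ℚ) * X + C (d:ℚ)).natDegree ≤ n * 1 :=
          Nat.mul_le_mul_left n (natDegree_linear_le)
        _ = n := mul_one n)
    have h2 : ((C (a : ℚ) * X + C (b : ℚ)) ^ (k - n - 2)).natDegree ≤ k - n - 2 :=
      natDegree_pow_le.trans (by
        calc (k-n-2) * (C (a:ℚ) * X + C (b:ℚ)).natDegree ≤ (k-n-2) * 1 :=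
          Nat.mul_le_mul_left _ (natDegree_linear_le)
        _ = k - n - 2 := mul_one _)
    calc (C (coefs n) * (C (c:ℚ) * X + C (d:ℚ)) ^ n *
          (C (a:ℚ) * X + C (b:ℚ)) ^ (k - n - 2)).natDegree
        ≤ (C (coefs n) * (C (c:ℚ) * X + C (d:ℚ)) ^ n).natDegree
            + ((C (a:ℚ) * X + C (b:ℚ)) ^ (k - n - 2)).natDegree := natDegree_mul_le
      _ ≤ ((C (coefs n)).natDegree + ((C (c:ℚ) * X + C (d:ℚ)) ^ n).natDegree)
            + ((C (a:ℚ) * X + C (b:ℚ)) ^ (k - n - 2)).natDegree :=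
          Nat.add_le_add_right natDegree_mul_le _
      _ ≤ k - 2 := by rw [natDegree_C]; omega
  · intro j hj
    rw [finset_sum_coeff, Finset.mul_sum]
    apply sum_exists_int
    intro n hn
    rw [Finset.mem_range] at hn
    have hn' : n ≤ k - 2 := by omega
    obtain ⟨t, ht⟩ := hcoefs n hn'
    rw [mul_assoc, coeff_C_mul, coeff_mul, Finset.mul_sum, Finset.mul_sum]
    apply sum_exists_int
    rintro ⟨i, l⟩ hil
    replace hil : i + l = k - 2 - j := Finset.HasAntidiagonal.mem_antidiagonal.mp hil
    rw [coeff_linear_pow, coeff_linear_pow]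
    by_cases hl : l ≤ k - n - 2
    · have hij : n ≤ i + j := by omega
      have hpow : (q:ℚ)^(j+1) * (q:ℚ)^i = (q:ℚ)^(i+j-n) * (q:ℚ)^(n+1) := by
        rw [← pow_add, ← pow_add]; congr 1; omega
      refine ⟨t * e^i * (n.choose i) * d^(n-i) * ((k-n-2).choose l) * a^l
        * b^(k-n-2-l) * q^(i+j-n), ?_⟩
      have hce : (c : ℚ) = (q : ℚ) * (e : ℚ) := by exact_mod_cast congrArg (Int.cast : ℤ → ℚ) he
      rw [hce, mul_pow]
      push_cast
      linear_combination ((n.choose i : ℚ) * (e:ℚ)^i * (d:ℚ)^(n-i) * ((k-n-2).choose l : ℚ)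
          * (a:ℚ)^l * (b:ℚ)^(k-n-2-l) * coefs n) * hpow
        + ((n.choose i : ℚ) * (e:ℚ)^i * (d:ℚ)^(n-i) * ((k-n-2).choose l : ℚ)
          * (a:ℚ)^l * (b:ℚ)^(k-n-2-l) * (q:ℚ)^(i+j-n)) * ht
    · refine ⟨0, ?_⟩
      rw [Nat.choose_eq_zero_of_lt (show k - n - 2 < l by omega)]
      push_cast
      ring
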